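/- Let f be a meromorphic almost periodic function on a horizontal strip S. If f has no poles in S, then f is an analytic almost periodic function on S. -/

import Mathlib

open Complex Filter Topology OnePoint Set MeasureTheory

noncomputable section

/-- The open horizontal strip `{z : a < Im z < b}` with extended-real bounds. -/
def Strip (a b : EReal) : Set ℂ := {z : ℂ | a < (z.im : EReal) ∧ (z.im : EReal) < b}

/-- A set `E ⊆ ℝ` is relatively dense. -/
def RelDense (E : Set ℝ) : Prop := ∃ L > (0 : ℝ), ∀ x : ℝ, ∃ τ ∈ E, x ≤ τ ∧ τ ≤ x + L

/-- The spherical (chordal) metric on `ℂ ∪ {∞}`. -/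
def sphDist : OnePoint ℂ → OnePoint ℂ → ℝ
  | (z : ℂ), (w : ℂ) => ‖z - w‖ /
      (Real.sqrt (1 + ‖z‖ ^ 2) * Real.sqrt (1 + ‖w‖ ^ 2))
  | (z : ℂ), ∞ => 1 / Real.sqrt (1 + ‖z‖ ^ 2)
  | ∞, (w : ℂ) => 1 / Real.sqrt (1 + ‖w‖ ^ 2)
  | ∞, ∞ => 0

/-- Inversion `w ↦ 1/w` on the Riemann sphere. -/
def sphInv : OnePoint ℂ → OnePoint ℂ
  | (z : ℂ) => if z = 0 then ∞ else ((z⁻¹ : ℂ) : OnePoint ℂ)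
  | ∞ => ((0 : ℂ) : OnePoint ℂ)

/-- `f : ℂ → ℂ ∪ {∞}` is meromorphic on an (open) set `U`: near every point of `U`
it is either given by an analytic function, or is the reciprocal of an analytic
function that does not vanish identically near the point (poles and the value `∞`
occurring exactly at the zeros of that function). -/
def SphMeromorphicOn (f : ℂ → OnePoint ℂ) (U : Set ℂ) : Prop :=
  ∀ z₀ ∈ U,
    (∃ g : ℂ → ℂ, AnalyticAt ℂ g z₀ ∧ ∀ᶠ z in nhds z₀, f z = ((g z : ℂ) : OnePoint ℂ)) ∨
    (∃ g : ℂ → ℂ, AnalyticAt ℂ g z₀ ∧ ¬ (∀ᶠ z in nhds z₀, g z = 0) ∧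
      ∀ᶠ z in nhds z₀, f z = sphInv (g z))

/-- Meromorphic almost periodic function on the strip `{a < Im z < b}`. -/
def MeromorphicAPOn (f : ℂ → OnePoint ℂ) (a b : EReal) : Prop :=
  SphMeromorphicOn f (Strip a b) ∧
  ∀ ε > (0 : ℝ), ∀ α β : ℝ, a < (α : EReal) → α < β → (β : EReal) < b →
    RelDense {τ : ℝ | ∀ z ∈ Strip (α : EReal) (β : EReal), sphDist (f (z + τ)) (f z) < ε}

/-- Analytic almost periodic function on the strip `{a < Im z < b}`. -/
def AnalyticAPOn (g : ℂ → ℂ) (a b : EReal) : Prop :=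
  DifferentiableOn ℂ g (Strip a b) ∧
  ∀ ε > (0 : ℝ), ∀ α β : ℝ, a < (α : EReal) → α < β → (β : EReal) < b →
    RelDense {τ : ℝ | ∀ z ∈ Strip (α : EReal) (β : EReal), ‖g (z + τ) - g z‖ < ε}

/-- `f` has a zero of order `m` at `c`. -/
def ZeroOfOrder (f : ℂ → OnePoint ℂ) (c : ℂ) (m : ℕ) : Prop :=
  0 < m ∧ ∃ h : ℂ → ℂ, AnalyticAt ℂ h c ∧ h c ≠ 0 ∧
    ∀ᶠ z in nhds c, f z = (((z - c) ^ m * h z : ℂ) : OnePoint ℂ)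

/-- `f` has a pole of order `m` at `c`. -/
def PoleOfOrder (f : ℂ → OnePoint ℂ) (c : ℂ) (m : ℕ) : Prop :=
  0 < m ∧ ∃ h : ℂ → ℂ, AnalyticAt ℂ h c ∧ h c ≠ 0 ∧
    ∀ᶠ z in nhds c, f z = sphInv (((z - c) ^ m * h z : ℂ))

/-- Almost periodic (continuous) function on the real line. -/
def APFunction (u : ℝ → ℝ) : Prop :=
  Continuous u ∧ ∀ ε > (0 : ℝ), RelDense {τ : ℝ | ∀ x : ℝ, |u (x + τ) - u x| < ε}

/-- The complex absolute value, as an absolute value built from the norm. -/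
def Complex.abs : AbsoluteValue ℂ ℝ where
  toFun z := ‖z‖
  map_mul' := norm_mul
  nonneg' := norm_nonneg
  eq_zero' _ := norm_eq_zero
  add_le' := norm_add_le

lemma Complex.abs_apply' (z : ℂ) : Complex.abs z = ‖z‖ := rfl

lemma Complex.norm_eq_abs (z : ℂ) : ‖z‖ = Complex.abs z := rfl

@[simp]
lemma Complex.abs_ofReal (r : ℝ) : Complex.abs (r : ℂ) = |r| := by
  simp [Complex.abs_apply']

@[simp]
lemma Complex.abs_I : Complex.abs Complex.I = 1 := by
  simp [Complex.abs_apply']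

lemma Complex.abs_conj (z : ℂ) : Complex.abs ((starRingEnd ℂ) z) = Complex.abs z := by
  simp [Complex.abs_apply']

lemma Complex.sq_abs (z : ℂ) : Complex.abs z ^ 2 = Complex.normSq z := Complex.sq_norm z

lemma Complex.abs_re_le_abs (z : ℂ) : |z.re| ≤ Complex.abs z := Complex.abs_re_le_norm z

lemma Complex.abs_im_le_abs (z : ℂ) : |z.im| ≤ Complex.abs z := Complex.abs_im_le_norm z

lemma Complex.continuous_abs : Continuous Complex.abs := continuous_norm

def sq1 (u : ℂ) : ℝ := Real.sqrt (1 + Complex.abs u ^ 2)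
def sphF (u v : ℂ) : ℝ := Complex.abs (u - v) / (sq1 u * sq1 v)
def dd1 (u : ℂ) : ℝ := 1 / sq1 u
def psi1 (t : ℝ) : ℝ := t / Real.sqrt (1 + t ^ 2)

lemma sq1_sq (u : ℂ) : sq1 u ^ 2 = 1 + Complex.abs u ^ 2 := by
  have : (0:ℝ) ≤ 1 + Complex.abs u ^ 2 := by positivity
  simp [sq1, Real.sq_sqrt this]

lemma one_le_sq1 (u : ℂ) : 1 ≤ sq1 u := by
  unfold sq1
  have h := Real.sqrt_le_sqrt (show (1:ℝ) ≤ 1 + Complex.abs u ^ 2 by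
    nlinarith [sq_nonneg (Complex.abs u)])
  rwa [Real.sqrt_one] at h

lemma sq1_pos (u : ℂ) : 0 < sq1 u := lt_of_lt_of_le one_pos (one_le_sq1 u)

lemma abs_le_sq1 (u : ℂ) : Complex.abs u ≤ sq1 u := by
  unfold sq1
  conv_lhs => rw [show Complex.abs u = Real.sqrt (Complex.abs u ^ 2) by
    rw [Real.sqrt_sq (Complex.abs.nonneg u)]]
  exact Real.sqrt_le_sqrt (by nlinarith)

lemma sq1_le (u : ℂ) : sq1 u ≤ 1 + Complex.abs u := by
  unfold sq1
  rw [show (1:ℝ) + Complex.abs u = Real.sqrt ((1 + Complex.abs u) ^ 2) by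
    rw [Real.sqrt_sq (by positivity)]]
  exact Real.sqrt_le_sqrt (by nlinarith [Complex.abs.nonneg u])

lemma sq1_le_two_mul (u : ℂ) (hu : 1 ≤ Complex.abs u) : sq1 u ≤ 2 * Complex.abs u := by
  unfold sq1
  rw [show (2:ℝ) * Complex.abs u = Real.sqrt ((2 * Complex.abs u) ^ 2) by
    rw [Real.sqrt_sq (by positivity)]]
  exact Real.sqrt_le_sqrt (by nlinarith)

lemma sq1_sub_le (u v : ℂ) : |sq1 u - sq1 v| ≤ Complex.abs (u - v) := by
  have h : ∀ w w' : ℂ, sq1 w - sq1 w' ≤ Complex.abs (w - w') := by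
    intro w w'
    have haw : Complex.abs w ≤ Complex.abs w' + Complex.abs (w - w') := by
      calc Complex.abs w = Complex.abs (w' + (w - w')) := by congr 1; ring
      _ ≤ _ := Complex.abs.add_le _ _
    have h1 : sq1 w ≤ sq1 w' + Complex.abs (w - w') := by
      have hpos : (0:ℝ) ≤ sq1 w' + Complex.abs (w - w') := by
        have := sq1_pos w'
        have := Complex.abs.nonneg (w - w')
        linarith
      have h2 := sq1_sq w
      have h2' := sq1_sq w'
      have h3 := abs_le_sq1 w'
      have h4 := Complex.abs.nonneg (w - w')
      have h5 := Complex.abs.nonneg w'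
      have h6 := sq1_pos w'
      calc sq1 w = Real.sqrt (sq1 w ^ 2) := (Real.sqrt_sq (sq1_pos w).le).symm
      _ ≤ Real.sqrt ((sq1 w' + Complex.abs (w - w')) ^ 2) :=
          Real.sqrt_le_sqrt (by nlinarith [Complex.abs.nonneg w])
      _ = _ := Real.sqrt_sq hpos
    linarith
  rw [abs_le]
  constructor
  · have := h v u
    have habs : Complex.abs (v - u) = Complex.abs (u - v) := by
      rw [show v - u = -(u - v) by ring, Complex.abs.map_neg]
    rw [habs] at this
    linarith
  · linarith [h u v]

lemma one_add_mul_le_sq1 (u v : ℂ) :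
    1 + Complex.abs u * Complex.abs v ≤ sq1 u * sq1 v := by
  unfold sq1
  rw [← Real.sqrt_mul (by positivity)]
  rw [show (1:ℝ) + Complex.abs u * Complex.abs v =
    Real.sqrt ((1 + Complex.abs u * Complex.abs v) ^ 2) by
      rw [Real.sqrt_sq (by positivity)]]
  refine Real.sqrt_le_sqrt ?_
  nlinarith [Complex.abs.nonneg u, Complex.abs.nonneg v,
    sq_nonneg (Complex.abs u - Complex.abs v)]

lemma sphF_nonneg (u v : ℂ) : 0 ≤ sphF u v := by
  have h1 := sq1_pos u; have h2 := sq1_pos v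
  exact div_nonneg (Complex.abs.nonneg _) (by nlinarith)

lemma sphF_comm (u v : ℂ) : sphF u v = sphF v u := by
  unfold sphF
  rw [show u - v = -(v - u) by ring, Complex.abs.map_neg]
  ring

lemma sphF_le_abs (u v : ℂ) : sphF u v ≤ Complex.abs (u - v) := by
  have h1 := one_le_sq1 u; have h2 := one_le_sq1 v
  have h3 := Complex.abs.nonneg (u - v)
  have h4 : (1:ℝ) ≤ sq1 u * sq1 v := by nlinarith
  unfold sphF
  rw [div_le_iff₀ (by nlinarith)]
  nlinarith [mul_le_mul_of_nonneg_left h4 h3]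

lemma abs_eq_sphF_mul (u v : ℂ) :
    Complex.abs (u - v) = sphF u v * (sq1 u * sq1 v) := by
  have h1 := sq1_pos u; have h2 := sq1_pos v
  unfold sphF
  field_simp

lemma sphF_triangle (u v w : ℂ) : sphF u w ≤ sphF u v + sphF v w := by
  have key : Complex.abs (u - w) * sq1 v ≤
      Complex.abs (u - v) * sq1 w + Complex.abs (v - w) * sq1 u := by
    have hid : (u - w) * (1 + (starRingEnd ℂ) v * v) =
        (u - v) * (1 + (starRingEnd ℂ) v * w) + (v - w) * (1 + (starRingEnd ℂ) v * u) := by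
      ring
    have h1 : Complex.abs ((u - w) * (1 + (starRingEnd ℂ) v * v)) ≤
        Complex.abs (u - v) * Complex.abs (1 + (starRingEnd ℂ) v * w) +
        Complex.abs (v - w) * Complex.abs (1 + (starRingEnd ℂ) v * u) := by
      rw [hid]
      calc _ ≤ Complex.abs ((u - v) * (1 + (starRingEnd ℂ) v * w)) +
          Complex.abs ((v - w) * (1 + (starRingEnd ℂ) v * u)) := Complex.abs.add_le _ _
      _ = _ := by rw [map_mul, map_mul]
    have h2 : Complex.abs ((u - w) * (1 + (starRingEnd ℂ) v * v)) =
        Complex.abs (u - w) * (1 + Complex.abs v ^ 2) := by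
      rw [map_mul]
      congr 1
      have hns : ((Complex.normSq v : ℝ) : ℂ) = (starRingEnd ℂ) v * v :=
        Complex.normSq_eq_conj_mul_self
      have : (1 : ℂ) + (starRingEnd ℂ) v * v = (((1 + Complex.normSq v : ℝ)) : ℂ) := by
        rw [Complex.ofReal_add, Complex.ofReal_one, hns]
      rw [this, Complex.abs_ofReal,
        _root_.abs_of_nonneg (by nlinarith [Complex.normSq_nonneg v]), Complex.sq_abs]
    have h3 : ∀ t : ℂ, Complex.abs (1 + (starRingEnd ℂ) v * t) ≤ sq1 v * sq1 t := by
      intro t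
      calc Complex.abs (1 + (starRingEnd ℂ) v * t) ≤
          Complex.abs (1:ℂ) + Complex.abs ((starRingEnd ℂ) v * t) := Complex.abs.add_le _ _
      _ = 1 + Complex.abs v * Complex.abs t := by rw [map_mul, Complex.abs_conj, map_one]
      _ ≤ _ := one_add_mul_le_sq1 v t
    have h4 : Complex.abs (u - w) * (1 + Complex.abs v ^ 2) ≤
        Complex.abs (u - v) * (sq1 v * sq1 w) + Complex.abs (v - w) * (sq1 v * sq1 u) := by
      rw [← h2]
      refine h1.trans ?_
      have h3w := h3 w; have h3u := h3 u
      have n1 := Complex.abs.nonneg (u - v)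
      have n2 := Complex.abs.nonneg (v - w)
      nlinarith
    have h5 : (1 : ℝ) + Complex.abs v ^ 2 = sq1 v * sq1 v := by
      rw [← sq1_sq v]; ring
    rw [h5] at h4
    have hv := sq1_pos v
    nlinarith
  have hu := sq1_pos u; have hv := sq1_pos v; have hw := sq1_pos w
  unfold sphF
  rw [div_add_div _ _ (by nlinarith) (by nlinarith),
    div_le_div_iff₀ (by nlinarith) (by positivity)]
  nlinarith [Complex.abs.nonneg (u - v), Complex.abs.nonneg (v - w),
    mul_pos hu hw, mul_pos hu hv, mul_pos hv hw,
    mul_pos (mul_pos hu hv) (mul_pos hv hw),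
    mul_pos (mul_pos hu hv) hw, mul_pos (mul_pos hu hu) hv,
    mul_le_mul_of_nonneg_left key (le_of_lt (mul_pos hu hw))]

lemma dd1_lip (u v : ℂ) : |dd1 u - dd1 v| ≤ sphF u v := by
  have hu := sq1_pos u; have hv := sq1_pos v
  have h : dd1 u - dd1 v = (sq1 v - sq1 u) / (sq1 u * sq1 v) := by
    unfold dd1; field_simp
  have h2 : |sq1 v - sq1 u| ≤ Complex.abs (u - v) := by
    rw [abs_sub_comm]; exact sq1_sub_le u v
  rw [h, abs_div, _root_.abs_of_pos (mul_pos hu hv)]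
  unfold sphF
  rw [div_le_div_iff₀ (mul_pos hu hv) (mul_pos hu hv)]
  nlinarith [mul_pos hu hv]

lemma dd1_pos (u : ℂ) : 0 < dd1 u := by
  have := sq1_pos u; unfold dd1; positivity

lemma dd1_le_one (u : ℂ) : dd1 u ≤ 1 := by
  unfold dd1
  rw [div_le_one (sq1_pos u)]
  exact one_le_sq1 u

lemma dd1_nonneg (u : ℂ) : 0 ≤ dd1 u := (dd1_pos u).le

lemma dd1_le_of_abs_ge (u : ℂ) (t : ℝ) (ht : 0 < t) (h : t ≤ Complex.abs u) :
    dd1 u ≤ 1 / t := by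
  unfold dd1
  apply one_div_le_one_div_of_le ht
  exact h.trans (abs_le_sq1 u)

lemma abs_ge_of_dd1_le (u : ℂ) (h : dd1 u ≤ 1/10) : 3 ≤ Complex.abs u := by
  have h1 := sq1_pos u
  have h2 : 10 ≤ sq1 u := by
    unfold dd1 at h
    rw [div_le_div_iff₀ h1 (by norm_num)] at h
    linarith
  have := sq1_sq u
  nlinarith [Complex.abs.nonneg u]

lemma dd1_eq_psi1_inv (u : ℂ) (hu : u ≠ 0) : dd1 u = psi1 (Complex.abs u⁻¹) := by
  have h1 : Complex.abs u⁻¹ = (Complex.abs u)⁻¹ := map_inv₀ _ _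
  have h2 : 0 < Complex.abs u := Complex.abs.pos hu
  unfold dd1 psi1 sq1
  rw [h1]
  rw [show (1:ℝ) + ((Complex.abs u)⁻¹) ^ 2 = (1 + Complex.abs u ^ 2) / Complex.abs u ^ 2 by
    field_simp; ring]
  rw [Real.sqrt_div (by positivity) (Complex.abs u ^ 2)]
  rw [show Real.sqrt (Complex.abs u ^ 2) = Complex.abs u from Real.sqrt_sq h2.le]
  have h3 : (0:ℝ) < Real.sqrt (1 + Complex.abs u ^ 2) := Real.sqrt_pos.mpr (by positivity)
  field_simp

lemma psi1_continuous : Continuous psi1 := by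
  apply Continuous.div continuous_id
  · exact (Real.continuous_sqrt.comp (by continuity))
  · intro x
    have : (0:ℝ) < 1 + x ^ 2 := by positivity
    exact ne_of_gt (Real.sqrt_pos.mpr this)

lemma psi1_eq_zero_iff (t : ℝ) (ht : 0 ≤ t) : psi1 t = 0 ↔ t = 0 := by
  unfold psi1
  constructor
  · intro h
    have h2 : (0:ℝ) < Real.sqrt (1 + t ^ 2) := Real.sqrt_pos.mpr (by positivity)
    field_simp at h
    simpa using h
  · intro h; simp [h]

lemma inv_sub_le_sphF (u v : ℂ) (hu : 1 ≤ Complex.abs u) (hv : 1 ≤ Complex.abs v) :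
    Complex.abs (u⁻¹ - v⁻¹) ≤ 4 * sphF u v := by
  have hu0 : u ≠ 0 := by intro h; rw [h] at hu; simp at hu; linarith
  have hv0 : v ≠ 0 := by intro h; rw [h] at hv; simp at hv; linarith
  have hau : 0 < Complex.abs u := Complex.abs.pos hu0
  have hav : 0 < Complex.abs v := Complex.abs.pos hv0
  have h1 : u⁻¹ - v⁻¹ = (v - u) / (u * v) := by field_simp
  rw [h1, map_div₀, map_mul]
  have h2 : Complex.abs (v - u) = Complex.abs (u - v) := by
    rw [show v - u = -(u - v) by ring, Complex.abs.map_neg]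
  rw [h2, abs_eq_sphF_mul u v]
  rw [div_le_iff₀ (by positivity)]
  have h3 := sq1_le_two_mul u hu
  have h4 := sq1_le_two_mul v hv
  have h5 := sphF_nonneg u v
  nlinarith [mul_le_mul h3 h4 (sq1_pos v).le (by positivity), sq1_pos u, sq1_pos v]

def untop1 : OnePoint ℂ → ℂ
  | (z : ℂ) => z
  | ∞ => 0

lemma untop1_coe (z : ℂ) : untop1 (z : OnePoint ℂ) = z := rfl

lemma eq_coe_untop1 (x : OnePoint ℂ) (hx : x ≠ ∞) : x = (untop1 x : OnePoint ℂ) := by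
  induction x using OnePoint.rec with
  | infty => exact absurd rfl hx
  | coe z => rfl

lemma sphDist_coe_coe (u v : ℂ) :
    sphDist (u : OnePoint ℂ) (v : OnePoint ℂ) = sphF u v := rfl

lemma sphInv_coe (c : ℂ) :
    sphInv (c : OnePoint ℂ) = if c = 0 then ∞ else ((c⁻¹ : ℂ) : OnePoint ℂ) := rfl

lemma isOpen_strip (a b : EReal) : IsOpen (Strip a b) := by
  have h : Strip a b = (fun z : ℂ => ((z.im : ℝ) : EReal)) ⁻¹' Set.Ioo a b := rfl
  rw [h]
  exact isOpen_Ioo.preimage (continuous_coe_real_ereal.comp Complex.continuous_im)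

lemma strip_mono {a b : EReal} {α β : ℝ} (hα : a < (α : EReal)) (hβ : (β : EReal) < b)
    {z : ℂ} (hz : z ∈ Strip (α : EReal) (β : EReal)) : z ∈ Strip a b :=
  ⟨lt_trans hα hz.1, lt_trans hz.2 hβ⟩

lemma mem_strip_iff {α β : ℝ} {z : ℂ} :
    z ∈ Strip (α : EReal) (β : EReal) ↔ α < z.im ∧ z.im < β := by
  unfold Strip
  simp [EReal.coe_lt_coe_iff]

lemma mem_strip_of_im {a b : EReal} {α β : ℝ} (hα : a < (α : EReal)) (hβ : (β : EReal) < b)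
    {z : ℂ} (h1 : α ≤ z.im) (h2 : z.im ≤ β) : z ∈ Strip a b := by
  constructor
  · exact lt_of_lt_of_le hα (by exact_mod_cast h1)
  · exact lt_of_le_of_lt (by exact_mod_cast h2) hβ

lemma add_real_im (z : ℂ) (τ : ℝ) : (z + (τ:ℂ)).im = z.im := by simp

lemma add_real_re (z : ℂ) (τ : ℝ) : (z + (τ:ℂ)).re = z.re + τ := by simp

lemma convex_strip (α β : ℝ) : Convex ℝ (Strip (α:EReal) (β:EReal)) := by
  intro x hx y hy s t hs ht hst
  rw [mem_strip_iff] at *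
  have him : (s • x + t • y).im = s * x.im + t * y.im := by
    simp [Complex.add_im, Complex.smul_im]
  rcases hx with ⟨hx1, hx2⟩; rcases hy with ⟨hy1, hy2⟩
  rcases eq_or_lt_of_le hs with hs0 | hs0
  · have hts : t = 1 := by linarith
    constructor <;> rw [him, ← hs0, hts] <;> simpa
  · constructor
    · rw [him]
      have a1 : s * α < s * x.im := by nlinarith
      have a2 : t * α ≤ t * y.im := by nlinarith
      have a3 : s * α + t * α = α := by rw [← add_mul, hst, one_mul]
      linarith
    · rw [him]
      have a1 : s * x.im < s * β := by nlinarith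
      have a2 : t * y.im ≤ t * β := by nlinarith
      have a3 : s * β + t * β = β := by rw [← add_mul, hst, one_mul]
      linarith

lemma exists_real_btwn {a c : EReal} (h : a < c) : ∃ x : ℝ, a < (x:EReal) ∧ (x:EReal) < c :=
  EReal.exists_between_coe_real h

-- rectangle compactness
lemma isCompact_rect (x₁ x₂ y₁ y₂ : ℝ) :
    IsCompact {z : ℂ | z.re ∈ Icc x₁ x₂ ∧ z.im ∈ Icc y₁ y₂} := by
  have h : {z : ℂ | z.re ∈ Icc x₁ x₂ ∧ z.im ∈ Icc y₁ y₂} =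
      (fun p : ℝ × ℝ => (p.1 : ℂ) + (p.2 : ℂ) * Complex.I) '' (Icc x₁ x₂ ×ˢ Icc y₁ y₂) := by
    ext z
    constructor
    · rintro ⟨h1, h2⟩
      exact ⟨(z.re, z.im), ⟨h1, h2⟩, by simp [Complex.re_add_im]⟩
    · rintro ⟨⟨p, q⟩, ⟨h1, h2⟩, rfl⟩
      constructor <;> simp [h1, h2]
  rw [h]
  exact (isCompact_Icc.prod isCompact_Icc).image (by continuity)

-- finite nets on compacts
lemma exists_finite_net {K : Set ℂ} (hK : IsCompact K) (θ : ℝ) (hθ : 0 < θ) :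
    ∃ T : Finset ℂ, (↑T : Set ℂ) ⊆ K ∧ ∀ z ∈ K, ∃ w ∈ T, Complex.abs (z - w) ≤ θ := by
  have hcover : K ⊆ ⋃ w ∈ K, Metric.ball w θ := by
    intro z hz
    exact mem_biUnion hz (Metric.mem_ball_self hθ)
  obtain ⟨T, hTsub, hTfin, hTcover⟩ := hK.elim_finite_subcover_image
    (fun w (_ : w ∈ K) => Metric.isOpen_ball) hcover
  refine ⟨hTfin.toFinset, by simpa using hTsub, fun z hz => ?_⟩
  obtain ⟨w, hw⟩ := mem_iUnion.mp (hTcover hz)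
  simp only [mem_iUnion] at hw
  obtain ⟨hwT, hzball⟩ := hw
  refine ⟨w, by simpa using hwT, ?_⟩
  have := Metric.mem_ball.mp hzball
  rw [Complex.dist_eq, Complex.norm_eq_abs] at this
  linarith

-- ultrafilter limits
lemma ultrafilter_lim_Icc (𝒰 : Ultrafilter ℕ) (g : ℕ → ℝ) (c₁ c₂ : ℝ)
    (hg : ∀ n, g n ∈ Icc c₁ c₂) :
    ∃ l ∈ Icc c₁ c₂, Tendsto g (𝒰 : Filter ℕ) (nhds l) := by
  have hle : (𝒰 : Filter ℕ).map g ≤ Filter.principal (Icc c₁ c₂) := by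
    rw [Filter.le_principal_iff]
    exact Filter.mem_map.mpr (by filter_upwards with n using hg n)
  obtain ⟨l, hl, hl2⟩ := isCompact_Icc.ultrafilter_le_nhds (𝒰.map g) hle
  exact ⟨l, hl, hl2⟩

lemma ultrafilter_lim_cball (𝒰 : Ultrafilter ℕ) (g : ℕ → ℂ) (R : ℝ)
    (hg : ∀ᶠ n in (𝒰 : Filter ℕ), g n ∈ Metric.closedBall 0 R) :
    ∃ l, Tendsto g (𝒰 : Filter ℕ) (nhds l) := by
  have hle : (𝒰 : Filter ℕ).map g ≤ Filter.principal (Metric.closedBall (0:ℂ) R) := by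
    rw [Filter.le_principal_iff]
    exact Filter.mem_map.mpr hg
  obtain ⟨l, _, hl2⟩ := (isCompact_closedBall (0:ℂ) R).ultrafilter_le_nhds (𝒰.map g) hle
  exact ⟨l, hl2⟩

-- D section: analyticity of the finite part
lemma analyticAt_untop1 (f : ℂ → OnePoint ℂ) (a b : EReal)
    (hm : SphMeromorphicOn f (Strip a b)) (hnp : ∀ z ∈ Strip a b, f z ≠ ∞)
    {z₀ : ℂ} (hz₀ : z₀ ∈ Strip a b) :
    AnalyticAt ℂ (fun z => untop1 (f z)) z₀ := by
  have hmem : ∀ᶠ z in nhds z₀, z ∈ Strip a b :=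
    eventually_of_mem ((isOpen_strip a b).mem_nhds hz₀) (fun z hz => hz)
  rcases hm z₀ hz₀ with ⟨g, hg, hev⟩ | ⟨g, hg, _, hev⟩
  · refine hg.congr ?_
    filter_upwards [hev] with z h1
    rw [h1, untop1_coe]
  · have hinf : sphInv ((0:ℂ) : OnePoint ℂ) = ∞ := by rw [sphInv_coe]; simp
    have hgz₀ : g z₀ ≠ 0 := by
      intro h0
      have h1 := hev.self_of_nhds
      rw [h0] at h1
      exact hnp z₀ hz₀ (h1.trans hinf)
    refine (hg.inv hgz₀).congr ?_
    filter_upwards [hev, hmem] with z h1 h2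
    have hgz : g z ≠ 0 := by
      intro h0
      apply hnp z h2
      rw [h1, h0]
      exact hinf
    rw [h1, sphInv_coe, if_neg hgz, untop1_coe, Pi.inv_apply]

lemma relDense_mono {E E' : Set ℝ} (h : E ⊆ E') (hE : RelDense E) : RelDense E' := by
  obtain ⟨L, hL, hsel⟩ := hE
  exact ⟨L, hL, fun x => by obtain ⟨τ, h1, h2⟩ := hsel x; exact ⟨τ, h h1, h2⟩⟩

-- UC lemma
lemma unif_cont (a b : EReal) (F : ℂ → ℂ)
    (hFan : ∀ z ∈ Strip a b, AnalyticAt ℂ F z)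
    (hap : ∀ ε : ℝ, 0 < ε → ∀ α' β' : ℝ, a < (α' : EReal) → α' < β' → (β' : EReal) < b →
      RelDense {τ : ℝ | ∀ z ∈ Strip (α' : EReal) (β' : EReal), sphF (F (z + τ)) (F z) < ε})
    (α₁ β₁ α₂ β₂ : ℝ) (h1 : a < (α₂ : EReal)) (h2 : α₂ < α₁) (h3 : α₁ < β₁)
    (h4 : β₁ < β₂) (h5 : (β₂ : EReal) < b) :
    ∀ ε : ℝ, ∃ θ : ℝ, 0 < θ ∧ θ ≤ 1 ∧ (0 < ε → ∀ z w : ℂ,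
      z.im ∈ Icc α₁ β₁ → w.im ∈ Icc α₁ β₁ → Complex.abs (z - w) ≤ θ →
      sphF (F z) (F w) ≤ ε) := by
  intro ε
  rcases le_or_gt ε 0 with hε | hε
  · exact ⟨1, one_pos, le_refl 1, fun hε' => absurd hε (not_le.mpr hε')⟩
  obtain ⟨L, hL, hsel⟩ := hap (ε/3) (by linarith) α₂ β₂ h1 (by linarith) h5
  set K : Set ℂ := {z : ℂ | z.re ∈ Icc (-1) (L+1) ∧ z.im ∈ Icc α₁ β₁} with hK
  have hKc : IsCompact K := isCompact_rect _ _ _ _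
  have hKsub : K ⊆ Strip a b := by
    rintro z ⟨_, hzim⟩
    exact mem_strip_of_im (lt_trans h1 (by exact_mod_cast h2))
      (lt_trans (by exact_mod_cast h4) h5) hzim.1 hzim.2
  have hFc : ContinuousOn F K := fun z hz =>
    ((hFan z (hKsub hz)).continuousAt).continuousWithinAt
  have hucF := hKc.uniformContinuousOn_of_continuous hFc
  rw [Metric.uniformContinuousOn_iff] at hucF
  obtain ⟨δ, hδ, hδp⟩ := hucF (ε/3) (by linarith)
  refine ⟨min (δ/2) 1, by positivity, min_le_right _ _, fun _ z w hzim hwim hzw => ?_⟩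
  obtain ⟨τ, hτE, hτ1, hτ2⟩ := hsel (-z.re)
  have hzK : z + (τ:ℂ) ∈ K := by
    constructor
    · rw [add_real_re]; constructor <;> [linarith; linarith]
    · rw [add_real_im]; exact hzim
  have hwK : w + (τ:ℂ) ∈ K := by
    have hre : |w.re - z.re| ≤ 1 := by
      have := Complex.abs_re_le_abs (w - z)
      have habs : Complex.abs (w - z) = Complex.abs (z - w) := by
        rw [show w - z = -(z - w) by ring, Complex.abs.map_neg]
      rw [Complex.sub_re] at this
      rw [habs] at this
      have : |w.re - z.re| ≤ Complex.abs (z - w) := this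
      calc |w.re - z.re| ≤ Complex.abs (z - w) := this
      _ ≤ min (δ/2) 1 := hzw
      _ ≤ 1 := min_le_right _ _
    have hre2 := abs_le.mp hre
    constructor
    · rw [add_real_re]; constructor <;> [linarith; linarith]
    · rw [add_real_im]; exact hwim
  have hz2 : z ∈ Strip (α₂ : EReal) (β₂ : EReal) := by
    rw [mem_strip_iff]
    exact ⟨lt_of_lt_of_le h2 hzim.1, lt_of_le_of_lt hzim.2 h4⟩
  have hw2 : w ∈ Strip (α₂ : EReal) (β₂ : EReal) := by
    rw [mem_strip_iff]
    exact ⟨lt_of_lt_of_le h2 hwim.1, lt_of_le_of_lt hwim.2 h4⟩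
  have t1 : sphF (F z) (F (z + (τ:ℂ))) ≤ ε/3 := by
    rw [sphF_comm]; exact (hτE z hz2).le
  have t3 : sphF (F (w + (τ:ℂ))) (F w) ≤ ε/3 := (hτE w hw2).le
  have t2 : sphF (F (z + (τ:ℂ))) (F (w + (τ:ℂ))) ≤ ε/3 := by
    have hdist : dist (z + (τ:ℂ)) (w + (τ:ℂ)) < δ := by
      rw [Complex.dist_eq]
      have : z + (τ:ℂ) - (w + (τ:ℂ)) = z - w := by ring
      rw [this]
      calc Complex.abs (z - w) ≤ min (δ/2) 1 := hzw
      _ ≤ δ/2 := min_le_left _ _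
      _ < δ := by linarith
    have := hδp _ hzK _ hwK hdist
    rw [Complex.dist_eq] at this
    exact (sphF_le_abs _ _).trans this.le
  calc sphF (F z) (F w) ≤ sphF (F z) (F (z + (τ:ℂ))) + sphF (F (z + (τ:ℂ))) (F w) :=
      sphF_triangle _ _ _
  _ ≤ sphF (F z) (F (z + (τ:ℂ))) + (sphF (F (z + (τ:ℂ))) (F (w + (τ:ℂ))) +
      sphF (F (w + (τ:ℂ))) (F w)) := by linarith [sphF_triangle (F (z + (τ:ℂ))) (F (w + (τ:ℂ))) (F w)]
  _ ≤ ε := by linarith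

-- LOC lemma: local limit function near a point where φ vanishes
lemma loc_lemma (F : ℂ → ℂ) (a b : EReal) (α₁ β₁ : ℝ)
    (hsub : ∀ z : ℂ, z.im ∈ Icc α₁ β₁ → z ∈ Strip a b)
    (hFan : ∀ z ∈ Strip a b, AnalyticAt ℂ F z)
    (θ : ℝ → ℝ)
    (hθpos : ∀ ε : ℝ, 0 < θ ε)
    (hθ : ∀ ε : ℝ, 0 < ε → ∀ z w : ℂ, z.im ∈ Icc α₁ β₁ → w.im ∈ Icc α₁ β₁ →
        Complex.abs (z - w) ≤ θ ε → sphF (F z) (F w) ≤ ε)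
    (𝒰 : Ultrafilter ℕ) (x : ℕ → ℝ)
    (φ : ℂ → ℝ)
    (hφ : ∀ z : ℂ, Tendsto (fun n => dd1 (F (z + ((x n : ℝ) : ℂ)))) (𝒰 : Filter ℕ) (nhds (φ z)))
    (p : ℂ) (rr : ℝ) (hrr : 0 < rr)
    (hball : ∀ w ∈ Metric.closedBall p rr, w.im ∈ Icc α₁ β₁)
    (hφp : φ p = 0) :
    ∃ ρ : ℝ, 0 < ρ ∧ ρ ≤ rr ∧ ∃ h : ℂ → ℂ,
      DifferentiableOn ℂ h (Metric.ball p ρ) ∧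
      (∀ z ∈ Metric.closedBall p ρ, φ z = psi1 (Complex.abs (h z))) ∧
      TendstoUniformlyOn (fun n z => (F (z + ((x n : ℝ) : ℂ)))⁻¹) h (𝒰 : Filter ℕ)
        (Metric.closedBall p ρ) ∧
      (∀ᶠ n in (𝒰 : Filter ℕ), ∀ z ∈ Metric.closedBall p ρ,
        3 ≤ Complex.abs (F (z + ((x n : ℝ) : ℂ)))) := by
  classical
  set ρ : ℝ := min (θ (1/40)) rr with hρdef
  have hρpos : 0 < ρ := lt_min (hθpos _) hrr
  have hρrr : ρ ≤ rr := min_le_right _ _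
  set K : Set ℂ := Metric.closedBall p ρ with hKdef
  have hKim : ∀ w ∈ K, w.im ∈ Icc α₁ β₁ := fun w hw =>
    hball w (Metric.closedBall_subset_closedBall hρrr hw)
  have hKtr : ∀ w ∈ K, ∀ n : ℕ, (w + ((x n : ℝ) : ℂ)).im ∈ Icc α₁ β₁ := by
    intro w hw n; rw [add_real_im]; exact hKim w hw
  have hpK : p ∈ K := Metric.mem_closedBall_self hρpos.le
  -- dd1-translate modulus
  have hmod : ∀ ε : ℝ, 0 < ε → ∀ z ∈ K, ∀ w ∈ K, Complex.abs (z - w) ≤ θ ε →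
      ∀ n : ℕ, |dd1 (F (z + ((x n : ℝ) : ℂ))) - dd1 (F (w + ((x n : ℝ) : ℂ)))| ≤ ε := by
    intro ε hε z hz w hw hzw n
    refine (dd1_lip _ _).trans (hθ ε hε _ _ (hKtr z hz n) (hKtr w hw n) ?_)
    have : z + ((x n : ℝ) : ℂ) - (w + ((x n : ℝ) : ℂ)) = z - w := by ring
    rw [this]; exact hzw
  -- φ modulus on K
  have hφmod : ∀ ε : ℝ, 0 < ε → ∀ z ∈ K, ∀ w ∈ K, Complex.abs (z - w) ≤ θ ε →
      |φ z - φ w| ≤ ε := by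
    intro ε hε z hz w hw hzw
    have ht : Tendsto (fun n => |dd1 (F (z + ((x n : ℝ) : ℂ))) -
        dd1 (F (w + ((x n : ℝ) : ℂ)))|) (𝒰 : Filter ℕ) (nhds (|φ z - φ w|)) :=
      ((hφ z).sub (hφ w)).abs
    exact le_of_tendsto ht (Filter.Eventually.of_forall (fun n => hmod ε hε z hz w hw hzw n))
  -- φ small on K
  have hφsmall : ∀ w ∈ K, φ w ≤ 1/40 := by
    intro w hw
    have := hφmod (1/40) (by norm_num) w hw p hpK (by
      have := Metric.mem_closedBall.mp hw
      rw [Complex.dist_eq] at this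
      calc Complex.abs (w - p) ≤ ρ := this
      _ ≤ θ (1/40) := min_le_left _ _)
    rw [hφp] at this
    have := abs_le.mp this
    linarith [this.2]
  -- finite net
  obtain ⟨T, hTK, hTnet⟩ := exists_finite_net (isCompact_closedBall p ρ) (θ (1/40)) (hθpos _)
  -- eventually |F| ≥ 3 on K
  have hev3 : ∀ᶠ n in (𝒰 : Filter ℕ), ∀ z ∈ K, 3 ≤ Complex.abs (F (z + ((x n : ℝ) : ℂ))) := by
    have hevT : ∀ᶠ n in (𝒰 : Filter ℕ), ∀ i ∈ T, dd1 (F (i + ((x n : ℝ) : ℂ))) ≤ 1/20 := by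
      rw [Filter.eventually_all_finset]
      intro i hi
      have hiK : i ∈ K := hTK hi
      have hlt : φ i < 1/20 := lt_of_le_of_lt (hφsmall i hiK) (by norm_num)
      exact ((hφ i).eventually_lt_const hlt).mono (fun n hn => hn.le)
    filter_upwards [hevT] with n hn z hz
    obtain ⟨i, hiT, hzi⟩ := hTnet z hz
    apply abs_ge_of_dd1_le
    have := hmod (1/40) (by norm_num) z hz i (hTK hiT) hzi n
    have h2 := hn i hiT
    have h3 := abs_le.mp this
    linarith [h3.1, h3.2]
  -- hseq and limit h
  set G : ℕ → ℂ → ℂ := fun n z => F (z + ((x n : ℝ) : ℂ)) with hGdef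
  set hseq : ℕ → ℂ → ℂ := fun n z => (G n z)⁻¹ with hhseq
  have hGne : ∀ n : ℕ, ∀ z : ℂ, 3 ≤ Complex.abs (G n z) → G n z ≠ 0 := by
    intro n z h3 h0
    rw [h0] at h3; simp at h3; linarith
  have hbdd : ∀ z ∈ K, ∀ᶠ n in (𝒰 : Filter ℕ), hseq n z ∈ Metric.closedBall (0:ℂ) 1 := by
    intro z hz
    filter_upwards [hev3] with n hn
    have h3 := hn z hz
    rw [Metric.mem_closedBall, dist_zero_right]
    have : ‖hseq n z‖ = (Complex.abs (G n z))⁻¹ := by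
      rw [hhseq]; simp [Complex.norm_eq_abs, map_inv₀]
    rw [this]
    have hpos : (0:ℝ) < Complex.abs (G n z) := by linarith
    rw [inv_le_one_iff₀]  -- may need fixing
    right; linarith
  set h : ℂ → ℂ := fun z => limUnder (𝒰 : Filter ℕ) (fun n => hseq n z) with hhdef
  have hlim : ∀ z ∈ K, Tendsto (fun n => hseq n z) (𝒰 : Filter ℕ) (nhds (h z)) := by
    intro z hz
    exact tendsto_nhds_limUnder (ultrafilter_lim_cball 𝒰 (fun n => hseq n z) 1 (hbdd z hz))
  -- equicontinuity
  have hevEq : ∀ ε : ℝ, 0 < ε → ∀ᶠ n in (𝒰 : Filter ℕ), ∀ z ∈ K, ∀ w ∈ K,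
      Complex.abs (z - w) ≤ θ ε → Complex.abs (hseq n z - hseq n w) ≤ 4 * ε := by
    intro ε hε
    filter_upwards [hev3] with n hn z hz w hw hzw
    have h1 : (1:ℝ) ≤ Complex.abs (G n z) := by linarith [hn z hz]
    have h2 : (1:ℝ) ≤ Complex.abs (G n w) := by linarith [hn w hw]
    refine (inv_sub_le_sphF _ _ h1 h2).trans ?_
    have := hθ ε hε _ _ (hKtr z hz n) (hKtr w hw n) (by
      have : z + ((x n : ℝ) : ℂ) - (w + ((x n : ℝ) : ℂ)) = z - w := by ring
      rw [this]; exact hzw)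
    linarith
  -- modulus for h
  have hhmod : ∀ ε : ℝ, 0 < ε → ∀ z ∈ K, ∀ w ∈ K, Complex.abs (z - w) ≤ θ ε →
      Complex.abs (h z - h w) ≤ 4 * ε := by
    intro ε hε z hz w hw hzw
    have ht : Tendsto (fun n => Complex.abs (hseq n z - hseq n w)) (𝒰 : Filter ℕ)
        (nhds (Complex.abs (h z - h w))) :=
      (Complex.continuous_abs.continuousAt).tendsto.comp ((hlim z hz).sub (hlim w hw))
    refine le_of_tendsto ht ?_
    filter_upwards [hevEq ε hε] with n hn
    exact hn z hz w hw hzw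
  -- uniform convergence
  have hunif : TendstoUniformlyOn hseq h (𝒰 : Filter ℕ) K := by
    rw [Metric.tendstoUniformlyOn_iff]
    intro δ hδ
    obtain ⟨T2, hT2K, hT2net⟩ := exists_finite_net (isCompact_closedBall p ρ) (θ (δ/100))
      (hθpos _)
    have hevT2 : ∀ᶠ n in (𝒰 : Filter ℕ), ∀ i ∈ T2, dist (hseq n i) (h i) < δ/4 := by
      rw [Filter.eventually_all_finset]
      intro i hi
      exact Metric.tendsto_nhds.mp (hlim i (hT2K hi)) (δ/4) (by linarith)
    filter_upwards [hevT2, hevEq (δ/100) (by linarith)] with n hn1 hn2 z hz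
    obtain ⟨i, hiT, hzi⟩ := hT2net z hz
    have e1 : Complex.abs (h z - h i) ≤ 4 * (δ/100) :=
      hhmod (δ/100) (by linarith) z hz i (hT2K hiT) hzi
    have e2 : Complex.abs (hseq n i - h i) < δ/4 := by
      have := hn1 i hiT
      rw [Complex.dist_eq] at this
      exact this
    have e3 : Complex.abs (hseq n z - hseq n i) ≤ 4 * (δ/100) :=
      hn2 z hz i (hT2K hiT) hzi
    rw [Complex.dist_eq]
    calc Complex.abs (h z - hseq n z) =
        Complex.abs ((h z - h i) + (h i - hseq n i) + (hseq n i - hseq n z)) := by ring_nf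
    _ ≤ Complex.abs ((h z - h i) + (h i - hseq n i)) + Complex.abs (hseq n i - hseq n z) :=
        Complex.abs.add_le _ _
    _ ≤ Complex.abs (h z - h i) + Complex.abs (h i - hseq n i) +
        Complex.abs (hseq n i - hseq n z) := by
          linarith [Complex.abs.add_le (h z - h i) (h i - hseq n i)]
    _ < δ := by
        have hs1 : Complex.abs (h i - hseq n i) = Complex.abs (hseq n i - h i) := by
          rw [show h i - hseq n i = -(hseq n i - h i) by ring, Complex.abs.map_neg]
        have hs2 : Complex.abs (hseq n i - hseq n z) = Complex.abs (hseq n z - hseq n i) := by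
          rw [show hseq n i - hseq n z = -(hseq n z - hseq n i) by ring, Complex.abs.map_neg]
        rw [hs1, hs2]
        linarith
  -- differentiability of h
  have hdiffseq : ∀ᶠ n in (𝒰 : Filter ℕ), DifferentiableOn ℂ (hseq n) (Metric.ball p ρ) := by
    filter_upwards [hev3] with n hn
    intro z hz
    have hzK : z ∈ K := Metric.ball_subset_closedBall hz
    have hGd : DifferentiableAt ℂ (G n) z := by
      have hF : DifferentiableAt ℂ F (z + ((x n : ℝ) : ℂ)) :=
        (hFan _ (hsub _ (hKtr z hzK n))).differentiableAt
      exact DifferentiableAt.comp z hF ((differentiable_id.add_const _) z)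
    exact ((hGd.inv (hGne n z (hn z hzK))).differentiableWithinAt)
  have hdiffh : DifferentiableOn ℂ h (Metric.ball p ρ) := by
    refine TendstoLocallyUniformlyOn.differentiableOn ?_ hdiffseq Metric.isOpen_ball
    exact (hunif.mono Metric.ball_subset_closedBall).tendstoLocallyUniformlyOn
  -- φ relation
  have hφrel : ∀ z ∈ K, φ z = psi1 (Complex.abs (h z)) := by
    intro z hz
    have he : ∀ᶠ n in (𝒰 : Filter ℕ),
        dd1 (F (z + ((x n : ℝ) : ℂ))) = psi1 (Complex.abs (hseq n z)) := by
      filter_upwards [hev3] with n hn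
      exact dd1_eq_psi1_inv _ (hGne n z (hn z hz))
    have ht2 : Tendsto (fun n => psi1 (Complex.abs (hseq n z))) (𝒰 : Filter ℕ)
        (nhds (psi1 (Complex.abs (h z)))) :=
      (psi1_continuous.continuousAt).tendsto.comp
        ((Complex.continuous_abs.continuousAt).tendsto.comp (hlim z hz))
    exact tendsto_nhds_unique ((hφ z).congr' he) ht2
  exact ⟨ρ, hρpos, hρrr, h, hdiffh, hφrel, hunif, hev3⟩

lemma abs_ofReal_mul_I (t : ℝ) : Complex.abs ((t:ℂ) * Complex.I) = |t| := by simp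

-- the main boundedness lemma
set_option maxHeartbeats 2000000 in
lemma bdd_main (a b : EReal) (F : ℂ → ℂ)
    (hFan : ∀ z ∈ Strip a b, AnalyticAt ℂ F z)
    (hap : ∀ ε : ℝ, 0 < ε → ∀ α' β' : ℝ, a < (α' : EReal) → α' < β' → (β' : EReal) < b →
      RelDense {τ : ℝ | ∀ z ∈ Strip (α' : EReal) (β' : EReal), sphF (F (z + τ)) (F z) < ε})
    (α β : ℝ) (hα : a < (α : EReal)) (hαβ : α < β) (hβ : (β : EReal) < b) :
    ∃ M : ℝ, ∀ z ∈ Strip (α : EReal) (β : EReal), Complex.abs (F z) ≤ M := by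
  classical
  by_contra hM
  push_neg at hM
  -- margins
  obtain ⟨α₂, hα2a, hα2α⟩ := EReal.exists_between_coe_real hα
  have hα2αr : α₂ < α := by exact_mod_cast hα2α
  obtain ⟨β₂, hββ2, hβ2b⟩ := EReal.exists_between_coe_real hβ
  have hββ2r : β < β₂ := by exact_mod_cast hββ2
  set α₁ : ℝ := (α₂ + α)/2 with hα₁def
  set β₁ : ℝ := (β + β₂)/2 with hβ₁def
  have h21 : α₂ < α₁ := by rw [hα₁def]; linarith
  have h1α : α₁ < α := by rw [hα₁def]; linarith
  have hββ1 : β < β₁ := by rw [hβ₁def]; linarith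
  have h12 : β₁ < β₂ := by rw [hβ₁def]; linarith
  have haα₁ : a < ((α₁ : ℝ) : EReal) := lt_trans hα2a (by exact_mod_cast h21)
  have hβ₁b : ((β₁ : ℝ) : EReal) < b := lt_trans (by exact_mod_cast h12) hβ2b
  have hsub : ∀ z : ℂ, z.im ∈ Icc α₁ β₁ → z ∈ Strip a b := fun z hz =>
    mem_strip_of_im haα₁ hβ₁b hz.1 hz.2
  -- UC
  have hUC := unif_cont a b F hFan hap α₁ β₁ α₂ β₂ hα2a h21 (by linarith) h12 hβ2b
  choose θ hθpos hθle hθprop using hUC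
  -- r
  set r : ℝ := min (min ((α - α₁)/2) ((β₁ - β)/2)) 1 with hrdef
  have hrpos : 0 < r := by
    apply lt_min (lt_min (by linarith) (by linarith)) one_pos
  have hr1 : r ≤ (α - α₁)/2 := (min_le_left _ _).trans (min_le_left _ _)
  have hr2 : r ≤ (β₁ - β)/2 := (min_le_left _ _).trans (min_le_right _ _)
  -- W
  set W : Set ℂ := Strip ((α - r : ℝ) : EReal) ((β + r : ℝ) : EReal) with hWdef
  have hWmem : ∀ z : ℂ, z ∈ W ↔ α - r < z.im ∧ z.im < β + r := fun z => mem_strip_iff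
  have hWim : ∀ z ∈ W, z.im ∈ Icc α₁ β₁ := by
    intro z hz
    rw [hWmem] at hz
    exact ⟨by linarith [hz.1], by linarith [hz.2]⟩
  have hWball : ∀ z ∈ W, ∀ w ∈ Metric.closedBall z r, w.im ∈ Icc α₁ β₁ := by
    intro z hz w hw
    rw [hWmem] at hz
    rw [Metric.mem_closedBall, Complex.dist_eq, Complex.norm_eq_abs] at hw
    have him : |w.im - z.im| ≤ r := by
      have h1 := Complex.abs_im_le_abs (w - z)
      rw [Complex.sub_im] at h1
      linarith
    have him2 := abs_le.mp him
    exact ⟨by linarith [hz.1, him2.1], by linarith [hz.2, him2.2]⟩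
  -- anchor
  set q : ℂ := (((α + β)/2 : ℝ) : ℂ) * Complex.I with hqdef
  have hqim : q.im = (α + β)/2 := by rw [hqdef]; simp
  have hqre : q.re = 0 := by rw [hqdef]; simp
  set c₀ : ℝ := dd1 (F q) with hc₀def
  have hc₀pos : 0 < c₀ := dd1_pos _
  set ε₀ : ℝ := c₀/4 with hε₀def
  have hε₀pos : 0 < ε₀ := by rw [hε₀def]; linarith
  obtain ⟨L₀, hL₀pos, hsel₀⟩ := hap ε₀ hε₀pos α₂ β₂ hα2a (by linarith) hβ2b
  -- unbounded sequence
  have hzs : ∀ n : ℕ, ∃ z, z ∈ Strip (α : EReal) (β : EReal) ∧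
      (n : ℝ) + 1 < Complex.abs (F z) := by
    intro n
    obtain ⟨z, hz1, hz2⟩ := hM ((n : ℝ) + 1)
    exact ⟨z, hz1, hz2⟩
  choose zs hzs1 hzs2 using hzs
  set xs : ℕ → ℝ := fun n => (zs n).re with hxsdef
  set ys : ℕ → ℝ := fun n => (zs n).im with hysdef
  have hysIcc : ∀ n, ys n ∈ Icc α β := by
    intro n
    have := mem_strip_iff.mp (hzs1 n)
    exact ⟨this.1.le, this.2.le⟩
  have hdd : ∀ n, dd1 (F (zs n)) ≤ 1/((n:ℝ)+1) :=
    fun n => dd1_le_of_abs_ge _ _ (by positivity) (hzs2 n).le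
  -- ultrafilter
  set 𝒰 : Ultrafilter ℕ := Ultrafilter.of (atTop : Filter ℕ) with h𝒰def
  have h𝒰le : (𝒰 : Filter ℕ) ≤ (atTop : Filter ℕ) := Ultrafilter.of_le _
  -- φ
  have hφex : ∀ z : ℂ, ∃ l ∈ Icc (0:ℝ) 1,
      Tendsto (fun n => dd1 (F (z + ((xs n : ℝ) : ℂ)))) (𝒰 : Filter ℕ) (nhds l) :=
    fun z => ultrafilter_lim_Icc 𝒰 _ 0 1 (fun n => ⟨dd1_nonneg _, dd1_le_one _⟩)
  choose φ hφmem hφt using hφex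
  -- dd1 modulus under translation
  have hmod : ∀ ε : ℝ, 0 < ε → ∀ z w : ℂ, z.im ∈ Icc α₁ β₁ → w.im ∈ Icc α₁ β₁ →
      Complex.abs (z - w) ≤ θ ε → ∀ n : ℕ,
      |dd1 (F (z + ((xs n : ℝ) : ℂ))) - dd1 (F (w + ((xs n : ℝ) : ℂ)))| ≤ ε := by
    intro ε hε z w hz hw hzw n
    refine (dd1_lip _ _).trans (hθprop ε hε _ _ ?_ ?_ ?_)
    · rw [add_real_im]; exact hz
    · rw [add_real_im]; exact hw
    · have : z + ((xs n : ℝ) : ℂ) - (w + ((xs n : ℝ) : ℂ)) = z - w := by ring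
      rw [this]; exact hzw
  have hφmod : ∀ ε : ℝ, 0 < ε → ∀ z w : ℂ, z.im ∈ Icc α₁ β₁ → w.im ∈ Icc α₁ β₁ →
      Complex.abs (z - w) ≤ θ ε → |φ z - φ w| ≤ ε := by
    intro ε hε z w hz hw hzw
    have ht : Tendsto (fun n => |dd1 (F (z + ((xs n : ℝ) : ℂ))) -
        dd1 (F (w + ((xs n : ℝ) : ℂ)))|) (𝒰 : Filter ℕ) (nhds (|φ z - φ w|)) :=
      ((hφt z).sub (hφt w)).abs
    exact le_of_tendsto ht (Filter.Eventually.of_forall (fun n => hmod ε hε z w hz hw hzw n))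
  -- limit height
  obtain ⟨ystar, hystarIcc, hystar⟩ := ultrafilter_lim_Icc 𝒰 ys α β hysIcc
  set pstar : ℂ := ((ystar : ℝ) : ℂ) * Complex.I with hpstardef
  have hpstarim : pstar.im = ystar := by rw [hpstardef]; simp
  have hpstarre : pstar.re = 0 := by rw [hpstardef]; simp
  have hpstarW : pstar ∈ W := by
    rw [hWmem, hpstarim]
    exact ⟨by linarith [hystarIcc.1], by linarith [hystarIcc.2]⟩
  -- φ pstar = 0
  have hφstar : φ pstar = 0 := by
    have key : ∀ ε : ℝ, 0 < ε → φ pstar ≤ 2 * ε := by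
      intro ε hε
      have ev1 : ∀ᶠ n in (𝒰 : Filter ℕ), |ys n - ystar| ≤ θ ε := by
        have := Metric.tendsto_nhds.mp hystar (θ ε) (hθpos ε)
        filter_upwards [this] with n hn
        rw [Real.dist_eq] at hn
        exact hn.le
      have ev2 : ∀ᶠ (n : ℕ) in (𝒰 : Filter ℕ), 1/((n:ℝ)+1) ≤ ε := by
        have htend : Tendsto (fun n : ℕ => 1/((n:ℝ)+1)) atTop (nhds 0) :=
          tendsto_one_div_add_atTop_nhds_zero_nat
        have := (htend.mono_left h𝒰le).eventually_lt_const hε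
        filter_upwards [this] with n hn using hn.le
      have ev3 : ∀ᶠ n in (𝒰 : Filter ℕ),
          dd1 (F (pstar + ((xs n : ℝ) : ℂ))) ≤ 2 * ε := by
        filter_upwards [ev1, ev2] with n hn1 hn2
        have hzrw : zs n = ((xs n : ℝ) : ℂ) + ((ys n : ℝ) : ℂ) * Complex.I :=
          (Complex.re_add_im (zs n)).symm
        have hdiff : pstar + ((xs n : ℝ) : ℂ) - zs n = ((ystar - ys n : ℝ) : ℂ) * Complex.I := by
          rw [hzrw, hpstardef]; push_cast; ring
        have habs : Complex.abs (pstar + ((xs n : ℝ) : ℂ) - zs n) ≤ θ ε := by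
          rw [hdiff, abs_ofReal_mul_I, abs_sub_comm]
          exact hn1
        have h1 : |dd1 (F (pstar + ((xs n : ℝ) : ℂ))) - dd1 (F (zs n))| ≤ ε := by
          refine (dd1_lip _ _).trans (hθprop ε hε _ _ ?_ ?_ habs)
          · rw [add_real_im, hpstarim]
            exact ⟨by linarith [hystarIcc.1], by linarith [hystarIcc.2]⟩
          · have := hysIcc n
            exact ⟨by linarith [this.1], by linarith [this.2]⟩
        have h2 := hdd n
        have h3 := abs_le.mp h1
        linarith [h3.2]
      exact le_of_tendsto (hφt pstar) ev3
    have h0 : φ pstar ≤ 0 := by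
      refine le_of_forall_pos_le_add ?_
      intro ε hε
      have := key (ε/2) (by linarith)
      linarith
    exact le_antisymm h0 (hφmem pstar).1
  -- U₁
  set U₁ : Set ℂ := {z : ℂ | ∃ ρ > (0:ℝ), ∀ w ∈ Metric.ball z ρ, φ w = 0} with hU₁def
  have hU₁open : IsOpen U₁ := by
    rw [Metric.isOpen_iff]
    rintro z ⟨ρ, hρ, hz⟩
    refine ⟨ρ/2, by linarith, ?_⟩
    rintro w hw
    refine ⟨ρ/2, by linarith, fun v hv => hz v ?_⟩
    rw [Metric.mem_ball] at *
    calc dist v z ≤ dist v w + dist w z := dist_triangle _ _ _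
    _ < ρ := by linarith
  -- case analysis
  by_cases hcase : ∃ z ∈ W, φ z = 0 ∧ z ∉ U₁
  · -- CASE I : a boundary-type zero of φ : max modulus contradiction
    obtain ⟨p, hpW, hφp, hpU⟩ := hcase
    obtain ⟨ρ, hρpos, hρr, h, hdiffh, hφrel, hunif, hev3⟩ :=
      loc_lemma F a b α₁ β₁ hsub hFan θ hθpos hθprop 𝒰 xs φ hφt p r hrpos
        (hWball p hpW) hφp
    have hpK : p ∈ Metric.closedBall p ρ := Metric.mem_closedBall_self hρpos.le
    have hhp : h p = 0 := by
      have h1 := hφrel p hpK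
      rw [hφp] at h1
      have h2 := (psi1_eq_zero_iff _ (Complex.abs.nonneg (h p))).mp h1.symm
      exact Complex.abs.eq_zero.mp h2
    have han : AnalyticAt ℂ h p := hdiffh.analyticAt (Metric.ball_mem_nhds p hρpos)
    rcases han.eventually_eq_zero_or_eventually_ne_zero with hz0 | hz1
    · -- h ≡ 0 near p : then p ∈ U₁, contradiction
      apply hpU
      obtain ⟨t, ht, htp⟩ := Metric.eventually_nhds_iff.mp hz0
      refine ⟨min t ρ, lt_min ht hρpos, fun w hw => ?_⟩
      rw [Metric.mem_ball] at hw
      have hwK : w ∈ Metric.closedBall p ρ := by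
        rw [Metric.mem_closedBall]
        exact le_of_lt (lt_of_lt_of_le hw (min_le_right _ _))
      have hw0 : h w = 0 := htp (lt_of_lt_of_le hw (min_le_left _ _))
      rw [hφrel w hwK, hw0]
      simp [psi1]
    · -- isolated zero : circle with positive minimum, then max modulus
      obtain ⟨t, ht, htp⟩ := Metric.eventually_nhds_iff.mp
        (eventually_nhdsWithin_iff.mp hz1)
      set ρ₁ : ℝ := min (t/2) (ρ/2) with hρ₁def
      have hρ₁pos : 0 < ρ₁ := lt_min (by linarith) (by linarith)
      have hρ₁ρ : ρ₁ < ρ := lt_of_le_of_lt (min_le_right _ _) (by linarith)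
      have hsphK : Metric.sphere p ρ₁ ⊆ Metric.closedBall p ρ := fun z hz => by
        rw [Metric.mem_sphere] at hz
        rw [Metric.mem_closedBall, hz]
        linarith
      have hsphball : Metric.sphere p ρ₁ ⊆ Metric.ball p ρ := fun z hz => by
        rw [Metric.mem_sphere] at hz
        rw [Metric.mem_ball, hz]
        linarith
      have hsphne : (Metric.sphere p ρ₁).Nonempty :=
        NormedSpace.sphere_nonempty.mpr hρ₁pos.le
      have hconth : ContinuousOn (fun z => Complex.abs (h z)) (Metric.sphere p ρ₁) :=
        (Complex.continuous_abs.comp_continuousOn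
          ((hdiffh.continuousOn).mono hsphball))
      obtain ⟨w₀, hw₀s, hw₀min⟩ := (isCompact_sphere p ρ₁).exists_isMinOn hsphne hconth
      set μ : ℝ := Complex.abs (h w₀) with hμdef
      have hμpos : 0 < μ := by
        have hw₀ne : h w₀ ≠ 0 := by
          apply htp
          · rw [Metric.mem_sphere] at hw₀s
            rw [hw₀s]
            have : t/2 < t := by linarith
            calc ρ₁ ≤ t/2 := min_le_left _ _
            _ < t := this
          · rw [mem_compl_iff, mem_singleton_iff]
            intro heq
            rw [Metric.mem_sphere, heq] at hw₀s
            simp at hw₀s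
            linarith
        exact Complex.abs.pos hw₀ne
      -- pick a good n
      have hevunif : ∀ᶠ n in (𝒰 : Filter ℕ), ∀ z ∈ Metric.closedBall p ρ,
          dist (h z) ((F (z + ((xs n : ℝ) : ℂ)))⁻¹) < μ/4 := by
        have := Metric.tendstoUniformlyOn_iff.mp hunif (μ/4) (by linarith)
        filter_upwards [this] with n hn z hz using hn z hz
      obtain ⟨n, hn3, hnu⟩ := (hev3.and hevunif).exists
      set G : ℂ → ℂ := fun z => F (z + ((xs n : ℝ) : ℂ)) with hGdef
      have hGne : ∀ z ∈ Metric.closedBall p ρ, G z ≠ 0 := by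
        intro z hz h0
        have h30 := hn3 z hz
        have hGeq : G z = F (z + ((xs n : ℝ) : ℂ)) := rfl
        rw [← hGeq, h0] at h30
        simp at h30
        linarith
      -- circle bound
      have hcirc : ∀ z ∈ Metric.sphere p ρ₁, Complex.abs (G z) ≤ 2/μ := by
        intro z hz
        have hzK := hsphK hz
        have h1 : μ ≤ Complex.abs (h z) := (isMinOn_iff.mp hw₀min) z hz
        have h2 : dist (h z) ((G z)⁻¹) < μ/4 := hnu z hzK
        rw [Complex.dist_eq, Complex.norm_eq_abs] at h2
        have h3 : Complex.abs ((G z)⁻¹) ≥ μ - μ/4 := by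
          have habs := AbsoluteValue.abs_abv_sub_le_abv_sub Complex.abs (h z) ((G z)⁻¹)
          have := abs_le.mp habs
          linarith [this.1, this.2]
        have h4 : Complex.abs ((G z)⁻¹) = (Complex.abs (G z))⁻¹ := map_inv₀ _ _
        rw [h4] at h3
        have h5 : (0:ℝ) < Complex.abs (G z) := Complex.abs.pos (hGne z hzK)
        rw [ge_iff_le, le_inv_comm₀ (by linarith) h5] at h3
        calc Complex.abs (G z) ≤ (μ - μ/4)⁻¹ := h3
        _ ≤ 2/μ := by
          rw [inv_eq_one_div]
          rw [div_le_div_iff₀ (by linarith) hμpos]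
          nlinarith
      -- center bound
      have hcenter : 4/μ ≤ Complex.abs (G p) := by
        have h2 : dist (h p) ((G p)⁻¹) < μ/4 := hnu p hpK
        rw [Complex.dist_eq, hhp, Complex.norm_eq_abs] at h2
        have h2' : Complex.abs ((G p)⁻¹) < μ/4 := by
          have : Complex.abs (0 - (G p)⁻¹) = Complex.abs ((G p)⁻¹) := by
            rw [zero_sub, Complex.abs.map_neg]
          rwa [this] at h2
        have h4 : Complex.abs ((G p)⁻¹) = (Complex.abs (G p))⁻¹ := map_inv₀ _ _
        rw [h4] at h2'
        have h5 : (0:ℝ) < Complex.abs (G p) := Complex.abs.pos (hGne p hpK)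
        have h6 : (0:ℝ) < (Complex.abs (G p))⁻¹ := by positivity
        rw [inv_lt_comm₀ h5 (by linarith)] at h2'
        have h7 : (μ/4)⁻¹ = 4/μ := by
          rw [inv_div]
        rw [h7] at h2'
        exact h2'.le
      -- max modulus principle on ball p ρ₁
      have hdG : DifferentiableOn ℂ G (Metric.closedBall p ρ₁) := by
        intro z hz
        have hzK : z ∈ Metric.closedBall p ρ := by
          rw [Metric.mem_closedBall] at *
          linarith
        have hFd : DifferentiableAt ℂ F (z + ((xs n : ℝ) : ℂ)) := by
          refine (hFan _ (hsub _ ?_)).differentiableAt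
          rw [add_real_im]
          exact hWball p hpW z (Metric.closedBall_subset_closedBall hρr hzK)
        exact (DifferentiableAt.comp z hFd
          ((differentiable_id.add_const _) z)).differentiableWithinAt
      have hdc : DiffContOnCl ℂ G (Metric.ball p ρ₁) := by
        apply DifferentiableOn.diffContOnCl
        rwa [closure_ball p (ne_of_gt hρ₁pos)]
      have hmax : ‖G p‖ ≤ 2/μ := by
        refine Complex.norm_le_of_forall_mem_frontier_norm_le
          Metric.isBounded_ball hdc ?_ ?_
        · intro z hz
          rw [frontier_ball p (ne_of_gt hρ₁pos)] at hz
          rw [Complex.norm_eq_abs]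
          exact hcirc z hz
        · rw [closure_ball p (ne_of_gt hρ₁pos)]
          exact Metric.mem_closedBall_self hρ₁pos.le
      rw [Complex.norm_eq_abs] at hmax
      have : (0:ℝ) < 1/μ := by positivity
      have h4lt : 4/μ ≤ 2/μ := le_trans hcenter hmax
      have : (4:ℝ)/μ > 2/μ := by
        rw [gt_iff_lt, div_lt_div_iff₀ hμpos hμpos]
        nlinarith
      linarith
  · -- CASE II
    push_neg at hcase
    by_cases hU2 : ∃ z ∈ W, φ z ≠ 0
    · -- preconnectedness contradiction
      obtain ⟨z₂, hz₂W, hz₂φ⟩ := hU2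
      set U₂ : Set ℂ := {z : ℂ | z ∈ W ∧ φ z ≠ 0} with hU₂def
      have hU₂open : IsOpen U₂ := by
        rw [Metric.isOpen_iff]
        rintro z ⟨hzW, hzφ⟩
        have hφpos : 0 < φ z := lt_of_le_of_ne (hφmem z).1 (Ne.symm hzφ)
        obtain ⟨ρw, hρw, hρwW⟩ := Metric.isOpen_iff.mp (isOpen_strip _ _) z hzW
        refine ⟨min ρw (θ (φ z/2)), lt_min hρw (hθpos _), ?_⟩
        intro w hw
        rw [Metric.mem_ball] at hw
        have hwW : w ∈ W := hρwW (by
          rw [Metric.mem_ball]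
          exact lt_of_lt_of_le hw (min_le_left _ _))
        refine ⟨hwW, ?_⟩
        have hd : Complex.abs (w - z) ≤ θ (φ z/2) := by
          rw [← Complex.norm_eq_abs, ← Complex.dist_eq]
          exact le_of_lt (lt_of_lt_of_le hw (min_le_right _ _))
        have := hφmod (φ z/2) (by linarith) w z (hWim w hwW) (hWim z hzW) hd
        have h2 := abs_le.mp this
        intro h0
        rw [h0] at h2
        have := h2.1
        simp at this
        linarith
      have hcover : W ⊆ U₁ ∪ U₂ := by
        intro z hz
        by_cases h0 : φ z = 0
        · exact Or.inl (hcase z hz h0)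
        · exact Or.inr ⟨hz, h0⟩
      have hpre : IsPreconnected W := (convex_strip (α - r) (β + r)).isPreconnected
      have hne1 : (W ∩ U₁).Nonempty := ⟨pstar, hpstarW, hcase pstar hpstarW hφstar⟩
      have hne2 : (W ∩ U₂).Nonempty := ⟨z₂, hz₂W, hz₂W, hz₂φ⟩
      obtain ⟨z₃, _, hz₃1, hz₃2⟩ := hpre U₁ U₂ hU₁open hU₂open hcover hne1 hne2
      obtain ⟨ρ₃, hρ₃, hz₃0⟩ := hz₃1
      exact hz₃2.2 (hz₃0 z₃ (Metric.mem_ball_self hρ₃))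
    · -- φ ≡ 0 on W : anchor contradiction
      push_neg at hU2
      set R : Set ℂ := {z : ℂ | z.re ∈ Icc (-L₀) L₀ ∧ z.im ∈ Icc α β} with hRdef
      have hRW : R ⊆ W := by
        rintro z ⟨_, hzim⟩
        rw [hWmem]
        exact ⟨by linarith [hzim.1], by linarith [hzim.2]⟩
      have hRim : ∀ z ∈ R, z.im ∈ Icc α₁ β₁ := fun z hz => hWim z (hRW hz)
      obtain ⟨T, hTR, hTnet⟩ := exists_finite_net (isCompact_rect (-L₀) L₀ α β)
        (θ ε₀) (hθpos _)
      have hevT : ∀ᶠ n in (𝒰 : Filter ℕ), ∀ i ∈ T,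
          dd1 (F (i + ((xs n : ℝ) : ℂ))) ≤ ε₀ := by
        rw [Filter.eventually_all_finset]
        intro i hi
        have hiR : i ∈ R := hTR hi
        have hφi : φ i = 0 := hU2 i (hRW hiR)
        have := (hφt i).eventually_lt_const (show φ i < ε₀ by rw [hφi]; exact hε₀pos)
        filter_upwards [this] with n hn using hn.le
      obtain ⟨n, hn⟩ := hevT.exists
      obtain ⟨τ, hτE, hτ1, hτ2⟩ := hsel₀ (xs n - L₀)
      set w : ℂ := q + (((τ - xs n : ℝ)) : ℂ) with hwdef
      have hwre : w.re = τ - xs n := by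
        rw [hwdef, add_real_re, hqre]; ring
      have hwim : w.im = (α + β)/2 := by
        rw [hwdef, add_real_im, hqim]
      have hwR : w ∈ R := by
        constructor
        · rw [hwre]
          exact ⟨by linarith, by linarith⟩
        · rw [hwim]
          exact ⟨by linarith, by linarith⟩
      obtain ⟨i, hiT, hwi⟩ := hTnet w hwR
      have hstep1 : dd1 (F (w + ((xs n : ℝ) : ℂ))) ≤ 2 * ε₀ := by
        have := hmod ε₀ hε₀pos w i (hRim w hwR) (hRim i (hTR hiT)) hwi n
        have h2 := abs_le.mp this
        have h3 := hn i hiT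
        linarith [h2.2]
      have hweq : w + ((xs n : ℝ) : ℂ) = q + ((τ : ℝ) : ℂ) := by
        rw [hwdef]; push_cast; ring
      rw [hweq] at hstep1
      have hq2 : q ∈ Strip ((α₂ : ℝ) : EReal) ((β₂ : ℝ) : EReal) := by
        rw [mem_strip_iff, hqim]
        exact ⟨by linarith, by linarith⟩
      have hτq : sphF (F (q + ((τ : ℝ) : ℂ))) (F q) < ε₀ := hτE q hq2
      have hstep2 : dd1 (F q) ≤ dd1 (F (q + ((τ : ℝ) : ℂ))) + ε₀ := by
        have := (dd1_lip (F q) (F (q + ((τ : ℝ) : ℂ))))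
        have h2 := abs_le.mp this
        rw [sphF_comm] at hτq
        linarith [h2.2]
      have : c₀ ≤ 3 * ε₀ := by
        rw [hc₀def]
        linarith
      rw [hε₀def] at this
      linarith

/-- A meromorphic almost periodic function without poles in the strip
is an analytic almost periodic function on the strip. -/
theorem meromorphicAP_no_poles_analyticAP (a b : EReal) (hab : a < b)
    (f : ℂ → OnePoint ℂ) (hf : MeromorphicAPOn f a b)
    (hnp : ∀ z ∈ Strip a b, f z ≠ ∞) :
    ∃ F : ℂ → ℂ, AnalyticAPOn F a b ∧ ∀ z ∈ Strip a b, f z = (F z : OnePoint ℂ) := by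
  classical
  set F : ℂ → ℂ := fun z => untop1 (f z) with hFdef
  have hfF : ∀ z ∈ Strip a b, f z = (F z : OnePoint ℂ) := fun z hz =>
    eq_coe_untop1 _ (hnp z hz)
  have hFan : ∀ z ∈ Strip a b, AnalyticAt ℂ F z := fun z hz =>
    analyticAt_untop1 f a b hf.1 hnp hz
  have hap : ∀ ε : ℝ, 0 < ε → ∀ α' β' : ℝ, a < (α' : EReal) → α' < β' → (β' : EReal) < b →
      RelDense {τ : ℝ | ∀ z ∈ Strip (α' : EReal) (β' : EReal), sphF (F (z + τ)) (F z) < ε} := by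
    intro ε hε α' β' h1 h2 h3
    refine relDense_mono ?_ (hf.2 ε hε α' β' h1 h2 h3)
    intro τ hτ z hz
    have hz1 : z ∈ Strip a b := strip_mono h1 h3 hz
    have hzτ : z + ((τ:ℝ):ℂ) ∈ Strip (α' : EReal) (β' : EReal) := by
      rw [mem_strip_iff] at *
      rw [add_real_im]
      exact hz
    have hz2 : z + ((τ:ℝ):ℂ) ∈ Strip a b := strip_mono h1 h3 hzτ
    have := hτ z hz
    rwa [hfF _ hz2, hfF _ hz1, sphDist_coe_coe] at this
  refine ⟨F, ⟨?_, ?_⟩, hfF⟩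
  · exact fun z hz => ((hFan z hz).differentiableAt).differentiableWithinAt
  · intro ε hε α' β' h1 h2 h3
    obtain ⟨M₀, hM₀⟩ := bdd_main a b F hFan hap α' β' h1 h2 h3
    set M : ℝ := max M₀ 0 with hMdef
    have hM : ∀ z ∈ Strip (α' : EReal) (β' : EReal), Complex.abs (F z) ≤ M :=
      fun z hz => (hM₀ z hz).trans (le_max_left _ _)
    have hMnn : (0:ℝ) ≤ M := le_max_right _ _
    have h1M : (0:ℝ) < 1 + M := by linarith
    set ε' : ℝ := ε / ((1+M)^2) with hε'def
    have hε' : 0 < ε' := div_pos hε (by nlinarith)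
    refine relDense_mono ?_ (hap ε' hε' α' β' h1 h2 h3)
    intro τ hτ z hz
    have hzτ : z + ((τ:ℝ):ℂ) ∈ Strip (α' : EReal) (β' : EReal) := by
      rw [mem_strip_iff] at *
      rw [add_real_im]
      exact hz
    have hs := hτ z hz
    have b1 : sq1 (F (z + ((τ:ℝ):ℂ))) ≤ 1 + M := (sq1_le _).trans (by linarith [hM _ hzτ])
    have b2 : sq1 (F z) ≤ 1 + M := (sq1_le _).trans (by linarith [hM _ hz])
    have hp1 := sq1_pos (F (z + ((τ:ℝ):ℂ)))
    have hp2 := sq1_pos (F z)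
    calc Complex.abs (F (z + ((τ:ℝ):ℂ)) - F z)
        = sphF (F (z + ((τ:ℝ):ℂ))) (F z) * (sq1 (F (z + ((τ:ℝ):ℂ))) * sq1 (F z)) :=
          abs_eq_sphF_mul _ _
    _ < ε' * (sq1 (F (z + ((τ:ℝ):ℂ))) * sq1 (F z)) :=
        mul_lt_mul_of_pos_right hs (mul_pos hp1 hp2)
    _ ≤ ε' * ((1+M)*(1+M)) := by
        apply mul_le_mul_of_nonneg_left ?_ hε'.le
        nlinarith
    _ = ε := by
        rw [hε'def]
        have hne : ((1:ℝ)+M)^2 ≠ 0 := by nlinarith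
        rw [show ((1:ℝ)+M)*(1+M) = (1+M)^2 by ring, div_mul_cancel₀ _ hne]
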